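/- arXiv:2602.01749 — 10 statements merged into one kernel-verified Lean document; each statement's English description precedes it below -/
import Mathlib

section
/- Let S be a type, let P_F, P_B : S → S → ℝ be forward and backward transition functions, let π : S → ℝ, let m ≥ 1, and let s : Fin (m+1) → S be a one-directional trajectory. Define the equally mixed policy P_half(x, y) = (P_F(x, y) + P_B(x, y))/2. Then the path-level reversibility equation π(s 0) · ∏_{i=0}^{m−1} P_half(s i, s (i+1)) = π(s m) · ∏_{i=0}^{m−1} P_half(s (i+1), s i) holds if and only if π(s 0) · ∏_{i=0}^{m−1} P_F(s i, s (i+1)) = π(s m) · ∏_{i=0}^{m−1} P_B(s (i+1), s i). -/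
/-- For a one-directional trajectory, path-level reversibility of the
equally mixed policy `P_half = (P_F + P_B)/2` is equivalent to the flow-matching-style
equation with `P_F` on the left and `P_B` on the right. -/
theorem stmt_0 (S : Type*) (PF PB : S → S → ℝ) (pi : S → ℝ)
    (m : ℕ) (hm : 1 ≤ m) (s : Fin (m + 1) → S)
    (hdir : ∀ i : Fin m,
      PF (s i.succ) (s i.castSucc) = 0 ∧ PB (s i.castSucc) (s i.succ) = 0)
    (Phalf : S → S → ℝ) (hPhalf : ∀ x y, Phalf x y = (PF x y + PB x y) / 2) :
    (pi (s 0) * ∏ i : Fin m, Phalf (s i.castSucc) (s i.succ)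
      = pi (s (Fin.last m)) * ∏ i : Fin m, Phalf (s i.succ) (s i.castSucc))
    ↔ (pi (s 0) * ∏ i : Fin m, PF (s i.castSucc) (s i.succ)
      = pi (s (Fin.last m)) * ∏ i : Fin m, PB (s i.succ) (s i.castSucc)) := by
  have h1 : ∀ i : Fin m, Phalf (s i.castSucc) (s i.succ)
      = PF (s i.castSucc) (s i.succ) / 2 := fun i => by
    rw [hPhalf, (hdir i).2, add_zero]
  have h2 : ∀ i : Fin m, Phalf (s i.succ) (s i.castSucc)
      = PB (s i.succ) (s i.castSucc) / 2 := fun i => by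
    rw [hPhalf, (hdir i).1, zero_add]
  rw [Finset.prod_congr rfl (fun i _ => h1 i), Finset.prod_congr rfl (fun i _ => h2 i),
    Finset.prod_div_distrib, Finset.prod_div_distrib, Finset.prod_const]
  have h2m : (0:ℝ) < 2 ^ m := by positivity
  simp only [Finset.card_univ, Fintype.card_fin]
  rw [← mul_div_assoc, ← mul_div_assoc, div_eq_div_iff h2m.ne' h2m.ne',
    mul_left_inj' h2m.ne']
end

section
/- Let S be a type, let P_F, P_B : S → S → ℝ be forward and backward transition functions, let π : S → ℝ, let α ∈ (0,1), let m ≥ 1, and let s : Fin (m+1) → S be a one-directional trajectory. Define the α-mixed policy P_α(x, y) = α·P_F(x, y) + (1−α)·P_B(x, y). Then the path-level reversibility equation π(s 0) · ∏_{i=0}^{m−1} P_α(s i, s (i+1)) = π(s m) · ∏_{i=0}^{m−1} P_α(s (i+1), s i) holds if and only if α^m · π(s 0) · ∏_{i=0}^{m−1} P_F(s i, s (i+1)) = (1−α)^m · π(s m) · ∏_{i=0}^{m−1} P_B(s (i+1), s i). -/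
/-- For a one-directional trajectory and `α ∈ (0,1)`, path-level
reversibility of the α-mixed policy `P_α = α·P_F + (1−α)·P_B` is equivalent to the
α-SubTB-style equation with weights `α^m` and `(1−α)^m`. -/
theorem stmt_1 (S : Type*) (PF PB : S → S → ℝ) (pi : S → ℝ)
    (α : ℝ) (hα : α ∈ Set.Ioo (0 : ℝ) 1)
    (m : ℕ) (hm : 1 ≤ m) (s : Fin (m + 1) → S)
    (hdir : ∀ i : Fin m,
      PF (s i.succ) (s i.castSucc) = 0 ∧ PB (s i.castSucc) (s i.succ) = 0)
    (Pα : S → S → ℝ) (hPα : ∀ x y, Pα x y = α * PF x y + (1 - α) * PB x y) :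
    (pi (s 0) * ∏ i : Fin m, Pα (s i.castSucc) (s i.succ)
      = pi (s (Fin.last m)) * ∏ i : Fin m, Pα (s i.succ) (s i.castSucc))
    ↔ (α ^ m * pi (s 0) * ∏ i : Fin m, PF (s i.castSucc) (s i.succ)
      = (1 - α) ^ m * pi (s (Fin.last m)) * ∏ i : Fin m, PB (s i.succ) (s i.castSucc)) := by
  have hF : ∏ i : Fin m, Pα (s i.castSucc) (s i.succ)
      = α ^ m * ∏ i : Fin m, PF (s i.castSucc) (s i.succ) := by
    have : ∀ i : Fin m, Pα (s i.castSucc) (s i.succ) = α * PF (s i.castSucc) (s i.succ) := by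
      intro i; rw [hPα, (hdir i).2]; ring
    simp only [this, Finset.prod_mul_distrib, Finset.prod_const, Finset.card_univ,
      Fintype.card_fin]
  have hB : ∏ i : Fin m, Pα (s i.succ) (s i.castSucc)
      = (1 - α) ^ m * ∏ i : Fin m, PB (s i.succ) (s i.castSucc) := by
    have : ∀ i : Fin m, Pα (s i.succ) (s i.castSucc) = (1 - α) * PB (s i.succ) (s i.castSucc) := by
      intro i; rw [hPα, (hdir i).1]; ring
    simp only [this, Finset.prod_mul_distrib, Finset.prod_const, Finset.card_univ,
      Fintype.card_fin]
  rw [hF, hB]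
  constructor <;> intro h <;> linarith
end

section
/- Let S be a finite type, let P_F, P_B : S → S → ℝ be forward and backward transition functions, let F : S → ℝ with Z := ∑_{x∈S} F(x) > 0, and set π(x) = F(x)/Z. Let m ≥ 1 and let s : Fin (m+1) → S be a one-directional trajectory, and let P_half(x, y) = (P_F(x, y) + P_B(x, y))/2. Then the SubTB target equation F(s 0) · ∏_{i=0}^{m−1} P_F(s i, s (i+1)) = F(s m) · ∏_{i=0}^{m−1} P_B(s (i+1), s i) holds if and only if the path-level reversibility equation π(s 0) · ∏_{i=0}^{m−1} P_half(s i, s (i+1)) = π(s m) · ∏_{i=0}^{m−1} P_half(s (i+1), s i) holds. -/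
/-- With flows `F`, normalization `π = F/Z` where `Z = ∑ F > 0`, on a
one-directional trajectory, the SubTB target equation is equivalent to path-level
reversibility of the equally mixed policy `P_half = (P_F + P_B)/2`. -/
theorem stmt_2 (S : Type*) [Fintype S] (PF PB : S → S → ℝ) (F : S → ℝ)
    (hZ : 0 < ∑ x, F x)
    (pi : S → ℝ) (hpi : ∀ x, pi x = F x / ∑ y, F y)
    (m : ℕ) (hm : 1 ≤ m) (s : Fin (m + 1) → S)
    (hdir : ∀ i : Fin m,
      PF (s i.succ) (s i.castSucc) = 0 ∧ PB (s i.castSucc) (s i.succ) = 0)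
    (Phalf : S → S → ℝ) (hPhalf : ∀ x y, Phalf x y = (PF x y + PB x y) / 2) :
    (F (s 0) * ∏ i : Fin m, PF (s i.castSucc) (s i.succ)
      = F (s (Fin.last m)) * ∏ i : Fin m, PB (s i.succ) (s i.castSucc))
    ↔ (pi (s 0) * ∏ i : Fin m, Phalf (s i.castSucc) (s i.succ)
      = pi (s (Fin.last m)) * ∏ i : Fin m, Phalf (s i.succ) (s i.castSucc)) := by
  have h1 : ∏ i : Fin m, Phalf (s i.castSucc) (s i.succ)
      = (∏ i : Fin m, PF (s i.castSucc) (s i.succ)) / 2 ^ m := by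
    rw [Finset.prod_congr rfl fun i _ => by
      rw [hPhalf, (hdir i).2, add_zero], Finset.prod_div_distrib,
      Finset.prod_const]
    simp
  have h2 : ∏ i : Fin m, Phalf (s i.succ) (s i.castSucc)
      = (∏ i : Fin m, PB (s i.succ) (s i.castSucc)) / 2 ^ m := by
    rw [Finset.prod_congr rfl fun i _ => by
      rw [hPhalf, (hdir i).1, zero_add], Finset.prod_div_distrib,
      Finset.prod_const]
    simp
  have hZ' : (∑ y, F y) ≠ 0 := hZ.ne'
  have h2m : (2 : ℝ) ^ m ≠ 0 := by positivity
  rw [h1, h2, hpi, hpi]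
  constructor <;> intro h
  · field_simp
    linarith
  · field_simp at h
    linarith
end

section
/- Let S be a finite type, let P_F, P_B : S → S → ℝ be forward and backward transition functions, let α ∈ (0,1), let F : S → ℝ with Z := ∑_{x∈S} F(x) > 0, and set π(x) = F(x)/Z. Let s, s' ∈ S be two states with P_F(s', s) = 0 and P_B(s, s') = 0, and let P_α(x, y) = α·P_F(x, y) + (1−α)·P_B(x, y). Then the α-DB target equation α·F(s)·P_F(s, s') = (1−α)·F(s')·P_B(s', s) holds if and only if the edge-level reversibility equation π(s)·P_α(s, s') = π(s')·P_α(s', s) holds. -/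
/-- With flows `F`, normalization `π = F/Z` where `Z = ∑ F > 0`, for an
edge `s → s'` (one-directional: `P_F(s',s) = 0` and `P_B(s,s') = 0`), the α-DB target
equation is equivalent to edge-level reversibility of `P_α = α·P_F + (1−α)·P_B`. -/
theorem stmt_3 (S : Type*) [Fintype S] (PF PB : S → S → ℝ)
    (α : ℝ) (hα : α ∈ Set.Ioo (0 : ℝ) 1)
    (F : S → ℝ) (hZ : 0 < ∑ x, F x)
    (pi : S → ℝ) (hpi : ∀ x, pi x = F x / ∑ y, F y)
    (s s' : S) (hF0 : PF s' s = 0) (hB0 : PB s s' = 0)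
    (Pα : S → S → ℝ) (hPα : ∀ x y, Pα x y = α * PF x y + (1 - α) * PB x y) :
    (α * F s * PF s s' = (1 - α) * F s' * PB s' s)
    ↔ (pi s * Pα s s' = pi s' * Pα s' s) := by
  have hZ' : (∑ x, F x) ≠ 0 := ne_of_gt hZ
  rw [hpi, hpi, hPα, hPα, hF0, hB0]
  rw [div_mul_eq_mul_div, div_mul_eq_mul_div, div_eq_div_iff hZ' hZ']
  constructor <;> intro h <;> nlinarith [h, hZ]
end

section
/- Let S be a finite type, let P_F, P_B : S → S → ℝ be forward and backward transition functions, let α ∈ (0,1), let F : S → ℝ with Z := ∑_{x∈S} F(x) > 0, and set π(x) = F(x)/Z. Let m ≥ 1, let s : Fin (m+1) → S be a one-directional trajectory, and let P_α(x, y) = α·P_F(x, y) + (1−α)·P_B(x, y). Then the α-SubTB target equation α^m · F(s 0) · ∏_{i=0}^{m−1} P_F(s i, s (i+1)) = (1−α)^m · F(s m) · ∏_{i=0}^{m−1} P_B(s (i+1), s i) holds if and only if the path-level reversibility equation π(s 0) · ∏_{i=0}^{m−1} P_α(s i, s (i+1)) = π(s m) · ∏_{i=0}^{m−1} P_α(s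 (i+1), s i) holds. -/
/-- With flows `F`, normalization `π = F/Z` where `Z = ∑ F > 0`, on a
one-directional trajectory, the α-SubTB target equation is equivalent to path-level
reversibility of the α-mixed policy `P_α = α·P_F + (1−α)·P_B`. -/
theorem stmt_4 (S : Type*) [Fintype S] (PF PB : S → S → ℝ)
    (α : ℝ) (hα : α ∈ Set.Ioo (0 : ℝ) 1)
    (F : S → ℝ) (hZ : 0 < ∑ x, F x)
    (pi : S → ℝ) (hpi : ∀ x, pi x = F x / ∑ y, F y)
    (m : ℕ) (hm : 1 ≤ m) (s : Fin (m + 1) → S)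
    (hdir : ∀ i : Fin m,
      PF (s i.succ) (s i.castSucc) = 0 ∧ PB (s i.castSucc) (s i.succ) = 0)
    (Pα : S → S → ℝ) (hPα : ∀ x y, Pα x y = α * PF x y + (1 - α) * PB x y) :
    (α ^ m * F (s 0) * ∏ i : Fin m, PF (s i.castSucc) (s i.succ)
      = (1 - α) ^ m * F (s (Fin.last m)) * ∏ i : Fin m, PB (s i.succ) (s i.castSucc))
    ↔ (pi (s 0) * ∏ i : Fin m, Pα (s i.castSucc) (s i.succ)
      = pi (s (Fin.last m)) * ∏ i : Fin m, Pα (s i.succ) (s i.castSucc)) := by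
  have hZ' : (∑ y, F y) ≠ 0 := hZ.ne'
  have h1 : ∀ i : Fin m, Pα (s i.castSucc) (s i.succ) = α * PF (s i.castSucc) (s i.succ) := by
    intro i; rw [hPα, (hdir i).2]; ring
  have h2 : ∀ i : Fin m, Pα (s i.succ) (s i.castSucc)
      = (1 - α) * PB (s i.succ) (s i.castSucc) := by
    intro i; rw [hPα, (hdir i).1]; ring
  rw [Finset.prod_congr rfl (fun i _ => h1 i), Finset.prod_congr rfl (fun i _ => h2 i),
    Finset.prod_mul_distrib, Finset.prod_mul_distrib, Finset.prod_const, Finset.prod_const,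
    Finset.card_univ, Fintype.card_fin, hpi, hpi]
  constructor <;> intro h
  · field_simp
    linear_combination h
  · field_simp at h
    linear_combination h
end

section
/- Let S be a type, let P_F, P_B : S → S → ℝ be forward and backward transition functions, let F : S → ℝ, let m ≥ 1, and let s : Fin (m+1) → S be a trajectory. Assume the edge-level detailed balance condition F(s i)·P_F(s i, s (i+1)) = F(s (i+1))·P_B(s (i+1), s i) holds for every i < m, and that F(s i) ≠ 0 for every i with 0 < i < m. Then the partial-trajectory balance equation holds: F(s 0) · ∏_{i=0}^{m−1} P_F(s i, s (i+1)) = F(s m) · ∏_{i=0}^{m−1} P_B(s (i+1), s i). -/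
lemma stmt_5_aux (S : Type*) (PF PB : S → S → ℝ) (F : S → ℝ) (t : ℕ → S)
    (n : ℕ) (h : ∀ i < n, F (t i) * PF (t i) (t (i+1)) = F (t (i+1)) * PB (t (i+1)) (t i)) :
    F (t 0) * ∏ i ∈ Finset.range n, PF (t i) (t (i+1))
      = F (t n) * ∏ i ∈ Finset.range n, PB (t (i+1)) (t i) := by
  induction n with
  | zero => simp
  | succ k ih =>
    rw [Finset.prod_range_succ, Finset.prod_range_succ, ← mul_assoc,
      ih (fun i hi => h i (by omega))]
    have := h k (by omega)
    linear_combination (∏ i ∈ Finset.range k, PB (t (i+1)) (t i)) * this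

/-- If edge-level detailed balance holds along a trajectory and the
intermediate flows are nonzero, then the partial-trajectory balance equation holds. -/
theorem stmt_5 (S : Type*) (PF PB : S → S → ℝ) (F : S → ℝ)
    (m : ℕ) (hm : 1 ≤ m) (s : Fin (m + 1) → S)
    (hdb : ∀ i : Fin m,
      F (s i.castSucc) * PF (s i.castSucc) (s i.succ)
        = F (s i.succ) * PB (s i.succ) (s i.castSucc))
    (hF : ∀ i : Fin (m + 1), 0 < (i : ℕ) → (i : ℕ) < m → F (s i) ≠ 0) :
    F (s 0) * ∏ i : Fin m, PF (s i.castSucc) (s i.succ)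
      = F (s (Fin.last m)) * ∏ i : Fin m, PB (s i.succ) (s i.castSucc) := by
  set t : ℕ → S := fun i => s ⟨min i m, by omega⟩ with ht
  have h0 : s 0 = t 0 := congrArg s (Fin.ext (by simp))
  have hlast : s (Fin.last m) = t m := by simp [ht, Fin.last]
  have hc : ∀ i : Fin m, s i.castSucc = t i := by
    intro i; exact congrArg s (Fin.ext (by simp))
  have hs : ∀ i : Fin m, s i.succ = t (i + 1) := by
    intro i
    have : ((i : ℕ) + 1) ⊓ m = (i : ℕ) + 1 := by omega
    simp [ht, Fin.succ, this]
  rw [h0, hlast]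
  have e1 : (∏ i : Fin m, PF (s i.castSucc) (s i.succ))
      = ∏ i ∈ Finset.range m, PF (t i) (t (i+1)) := by
    rw [Finset.prod_range fun i => PF (t i) (t (i+1))]
    exact Finset.prod_congr rfl fun i _ => by rw [hc, hs]
  have e2 : (∏ i : Fin m, PB (s i.succ) (s i.castSucc))
      = ∏ i ∈ Finset.range m, PB (t (i+1)) (t i) := by
    rw [Finset.prod_range fun i => PB (t (i+1)) (t i)]
    exact Finset.prod_congr rfl fun i _ => by rw [hc, hs]
  rw [e1, e2]
  exact stmt_5_aux S PF PB F t m fun i hi => by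
    have := hdb ⟨i, hi⟩
    rwa [hc ⟨i, hi⟩, hs ⟨i, hi⟩] at this
end

section
/- Let S be a nonempty finite type with decidable equality, let P : Matrix S S ℝ, let π : S → ℝ have all entries strictly positive, let D = Matrix.diagonal π, let Π be the matrix with Π(s, s') = π(s') (every row equal to π), and let P̃ be the time-reversal of P with respect to π. Then 1 − P̃ + Π = D⁻¹ · (1 − P + Π)ᵀ · D. Consequently, if 1 − P + Π is invertible then 1 − P̃ + Π is invertible, and the fundamental matrices satisfy the balance relation Z̃ = D⁻¹ · Zᵀ · D, where Z = (1 − P + Π)⁻¹ and Z̃ = (1 − P̃ + Π)⁻¹; that is, Z̃(s, s') = π(s')·Z(s', s)/π(s) for all s, s'. -/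
open Matrix

/-! The identity `1 - P̃ + Π = D⁻¹ (1 - P + Π)ᵀ D` holds term by term: the time-reversal is
`P̃ = D⁻¹ Pᵀ D`, while `Π = D⁻¹ Πᵀ D` because every row of `Π` equals `π`. Conjugating the
transpose by the invertible `D` preserves invertibility and commutes with inversion, which gives
the balance relation for the fundamental matrices. -/

namespace Matrix

variable {n K : Type*} [Fintype n] [DecidableEq n] [Field K]

theorem inv_diagonal_of_ne_zero {d : n → K} (hd : ∀ i, d i ≠ 0) :
    (diagonal d)⁻¹ = diagonal d⁻¹ :=
  inv_eq_left_inv <| by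
    rw [diagonal_mul_diagonal, ← diagonal_one]
    exact congrArg diagonal (funext fun i => inv_mul_cancel₀ (hd i))

theorem inv_diagonal_mul_transpose_mul_diagonal_apply {d : n → K} (hd : ∀ i, d i ≠ 0)
    (M : Matrix n n K) (i j : n) :
    ((diagonal d)⁻¹ * Mᵀ * diagonal d) i j = d j * M j i / d i := by
  rw [inv_diagonal_of_ne_zero hd, mul_diagonal, diagonal_mul, transpose_apply, Pi.inv_apply]
  ring

theorem inv_mul_transpose_one_sub_add_mul {D : Matrix n n K} (hD : IsUnit D)
    (A B : Matrix n n K) :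
    D⁻¹ * (1 - A + B)ᵀ * D = 1 - D⁻¹ * Aᵀ * D + D⁻¹ * Bᵀ * D := by
  have hDD : D⁻¹ * D = 1 := nonsing_inv_mul D ((isUnit_iff_isUnit_det D).1 hD)
  rw [transpose_add, transpose_sub, transpose_one, Matrix.mul_add, Matrix.mul_sub, mul_one,
    Matrix.add_mul, Matrix.sub_mul, hDD]

theorem isUnit_inv_mul_transpose_mul {D M : Matrix n n K} (hD : IsUnit D) (hM : IsUnit M) :
    IsUnit (D⁻¹ * Mᵀ * D) :=
  ((isUnit_nonsing_inv_iff.2 hD).mul ((isUnit_transpose M).2 hM)).mul hD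

theorem nonsing_inv_inv_mul_transpose_mul {D : Matrix n n K} (hD : IsUnit D)
    (M : Matrix n n K) : (D⁻¹ * Mᵀ * D)⁻¹ = D⁻¹ * M⁻¹ᵀ * D := by
  rw [mul_inv_rev, mul_inv_rev, nonsing_inv_nonsing_inv D ((isUnit_iff_isUnit_det D).1 hD),
    transpose_nonsing_inv, Matrix.mul_assoc]

end Matrix

theorem stmt_12_general (S : Type*) [Fintype S] [DecidableEq S]
    (P : Matrix S S ℝ) (pi : S → ℝ) (hpos : ∀ s, 0 < pi s)
    (D : Matrix S S ℝ) (hD : D = Matrix.diagonal pi)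
    (Pi : Matrix S S ℝ) (hPi : ∀ s s', Pi s s' = pi s')
    (Pt : Matrix S S ℝ) (hPt : ∀ s s', Pt s s' = pi s' * P s' s / pi s) :
    (1 - Pt + Pi = D⁻¹ * (1 - P + Pi)ᵀ * D) ∧
    (IsUnit (1 - P + Pi) →
      IsUnit (1 - Pt + Pi) ∧
      ∀ s s', (1 - Pt + Pi)⁻¹ s s' = pi s' * (1 - P + Pi)⁻¹ s' s / pi s) := by
  have hne : ∀ s, pi s ≠ 0 := fun s => (hpos s).ne'
  have hDunit : IsUnit D :=
    hD ▸ isUnit_diagonal.2 (_root_.Pi.isUnit_iff.2 fun s => (hne s).isUnit)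
  have conj_apply : ∀ (M : Matrix S S ℝ) s s', (D⁻¹ * Mᵀ * D) s s' = pi s' * M s' s / pi s :=
    hD ▸ inv_diagonal_mul_transpose_mul_diagonal_apply hne
  have hPt' : Pt = D⁻¹ * Pᵀ * D := by
    ext s s'
    rw [hPt, conj_apply]
  have hPi' : Pi = D⁻¹ * Piᵀ * D := by
    ext s s'
    rw [conj_apply, hPi, hPi, mul_div_cancel_right₀ _ (hne s)]
  have key : 1 - Pt + Pi = D⁻¹ * (1 - P + Pi)ᵀ * D := by
    rw [inv_mul_transpose_one_sub_add_mul hDunit, ← hPt', ← hPi']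
  refine ⟨key, fun hM => ⟨key ▸ isUnit_inv_mul_transpose_mul hDunit hM, fun s s' => ?_⟩⟩
  rw [key, nonsing_inv_inv_mul_transpose_mul hDunit, conj_apply]

/-- With `D = diagonal π` and `Π` the matrix each of whose rows equals
`π`, the time-reversal satisfies `1 − P̃ + Π = D⁻¹·(1 − P + Π)ᵀ·D`; hence if
`1 − P + Π` is invertible so is `1 − P̃ + Π`, and the fundamental matrices satisfy
`Z̃(s,s') = π(s')·Z(s',s)/π(s)`. -/
theorem stmt_12 (S : Type*) [Fintype S] [Nonempty S] [DecidableEq S]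
    (P : Matrix S S ℝ) (pi : S → ℝ) (hpos : ∀ s, 0 < pi s)
    (D : Matrix S S ℝ) (hD : D = Matrix.diagonal pi)
    (Pi : Matrix S S ℝ) (hPi : ∀ s s', Pi s s' = pi s')
    (Pt : Matrix S S ℝ) (hPt : ∀ s s', Pt s s' = pi s' * P s' s / pi s) :
    (1 - Pt + Pi = D⁻¹ * (1 - P + Pi)ᵀ * D) ∧
    (IsUnit (1 - P + Pi) →
      IsUnit (1 - Pt + Pi) ∧
      ∀ s s', (1 - Pt + Pi)⁻¹ s s' = pi s' * (1 - P + Pi)⁻¹ s' s / pi s) :=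
  stmt_12_general S P pi hpos D hD Pi hPi Pt hPt
end

section
/- Let S be a type, let π : S → ℝ have all entries strictly positive, let Z : S → S → ℝ, and define Z̃(s, s') = π(s')·Z(s', s)/π(s). Then for all states s and s̄: π(s)·(Z̃(s̄, s̄) − Z̃(s, s̄)) + π(s̄)·(Z̃(s, s) − Z̃(s̄, s)) = π(s)·(Z(s̄, s̄) − Z(s, s̄)) + π(s̄)·(Z(s, s) − Z(s̄, s)). In particular, if Z satisfies the GFNMC constraint π(s)·(Z(s̄, s̄) − Z(s, s̄)) + π(s̄)·(Z(s, s) − Z(s̄, s)) = π(s̄) for all s ≠ s̄, then Z̃ satisfies the same constraint. -/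
/-- The GFNMC constraint expression is invariant under the π-reversal
`Z̃(s,s') = π(s')·Z(s',s)/π(s)`; in particular, if `Z` satisfies the GFNMC constraint
then so does `Z̃`. -/
theorem stmt_13 (S : Type*) (pi : S → ℝ) (hpos : ∀ s, 0 < pi s)
    (Z : S → S → ℝ) (Zt : S → S → ℝ)
    (hZt : ∀ s s', Zt s s' = pi s' * Z s' s / pi s) :
    (∀ s sb : S,
      pi s * (Zt sb sb - Zt s sb) + pi sb * (Zt s s - Zt sb s)
        = pi s * (Z sb sb - Z s sb) + pi sb * (Z s s - Z sb s)) ∧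
    ((∀ s sb : S, s ≠ sb →
        pi s * (Z sb sb - Z s sb) + pi sb * (Z s s - Z sb s) = pi sb) →
      ∀ s sb : S, s ≠ sb →
        pi s * (Zt sb sb - Zt s sb) + pi sb * (Zt s s - Zt sb s) = pi sb) := by
  have key : ∀ s sb : S,
      pi s * (Zt sb sb - Zt s sb) + pi sb * (Zt s s - Zt sb s)
        = pi s * (Z sb sb - Z s sb) + pi sb * (Z s s - Z sb s) := by
    intro s sb
    have hs := (hpos s).ne'
    have hsb := (hpos sb).ne'
    rw [hZt, hZt, hZt, hZt]
    field_simp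
    ring
  exact ⟨key, fun h s sb hne => (key s sb).trans (h s sb hne)⟩
end

section
/- Let S be a nonempty finite type with decidable equality, let P : Matrix S S ℝ be row-stochastic, let π : S → ℝ be a stationary distribution for P with all entries strictly positive, let P̃ be the time-reversal of P with respect to π, let α ∈ (0,1), and let P_α = α·P + (1−α)·P̃. Then for every state s, the two-step return probability is strictly positive: (P_α^2)(s, s) > 0. -/
/-- For `α ∈ (0,1)`, the mixture `P_α = α·P + (1−α)·P̃` of a
row-stochastic matrix and its time-reversal with respect to a strictly positive
stationary distribution has strictly positive two-step return probabilities. -/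
theorem stmt_16 (S : Type*) [Fintype S] [Nonempty S] [DecidableEq S]
    (P : Matrix S S ℝ)
    (hP0 : ∀ s s', 0 ≤ P s s') (hP1 : ∀ s, ∑ s', P s s' = 1)
    (pi : S → ℝ) (hpos : ∀ s, 0 < pi s) (hsum : ∑ s, pi s = 1)
    (hstat : ∀ s', ∑ s, pi s * P s s' = pi s')
    (Pt : Matrix S S ℝ) (hPt : ∀ s s', Pt s s' = pi s' * P s' s / pi s)
    (α : ℝ) (hα : α ∈ Set.Ioo (0 : ℝ) 1)
    (Pα : Matrix S S ℝ) (hPα : Pα = α • P + (1 - α) • Pt) :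
    ∀ s : S, 0 < (Pα ^ 2) s s := by
  obtain ⟨hα0, hα1⟩ := hα
  have hα1' : 0 < 1 - α := by linarith
  -- entries of Pα are nonnegative
  have hPt0 : ∀ s s', 0 ≤ Pt s s' := by
    intro s s'
    rw [hPt]
    exact div_nonneg (mul_nonneg (hpos s').le (hP0 s' s)) (hpos s).le
  have hPα0 : ∀ s s', 0 ≤ Pα s s' := by
    intro s s'
    rw [hPα]
    simp only [Matrix.add_apply, Matrix.smul_apply, smul_eq_mul]
    exact add_nonneg (mul_nonneg hα0.le (hP0 s s')) (mul_nonneg hα1'.le (hPt0 s s'))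
  intro s
  -- find t with P s t > 0
  have hex : ∃ t, 0 < P s t := by
    by_contra h
    push_neg at h
    have : ∑ t, P s t = 0 := Finset.sum_eq_zero fun t _ => le_antisymm (h t) (hP0 s t)
    rw [hP1 s] at this
    norm_num at this
  obtain ⟨t, ht⟩ := hex
  have h1 : 0 < Pα s t := by
    rw [hPα]
    simp only [Matrix.add_apply, Matrix.smul_apply, smul_eq_mul]
    have : 0 < α * P s t := mul_pos hα0 ht
    have h2 : 0 ≤ (1 - α) * Pt s t := mul_nonneg hα1'.le (hPt0 s t)
    linarith
  have h2 : 0 < Pα t s := by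
    rw [hPα]
    simp only [Matrix.add_apply, Matrix.smul_apply, smul_eq_mul]
    have hpt : 0 < Pt t s := by
      rw [hPt]
      exact div_pos (mul_pos (hpos s) ht) (hpos t)
    have : 0 < (1 - α) * Pt t s := mul_pos hα1' hpt
    have h3 : 0 ≤ α * P t s := mul_nonneg hα0.le (hP0 t s)
    linarith
  have hsq : (Pα ^ 2) s s = ∑ u, Pα s u * Pα u s := by
    rw [pow_two, Matrix.mul_apply]
  rw [hsq]
  exact Finset.sum_pos' (fun u _ => mul_nonneg (hPα0 s u) (hPα0 u s))
    ⟨t, Finset.mem_univ t, mul_pos h1 h2⟩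
end

section
/- Let S be a nonempty finite type with decidable equality, let P : Matrix S S ℝ be row-stochastic, let π : S → ℝ be a stationary distribution for P with all entries strictly positive, let P̃ be the time-reversal of P with respect to π, let α ∈ (0,1), and let P_α = α·P + (1−α)·P̃. Fix a state s and let k be a natural number that divides every n ≥ 1 with (P_α^n)(s, s) > 0. Then k divides 2. If moreover there exists an odd n ≥ 1 with (P^n)(s, s) > 0, then k = 1; that is, if the period of P at s is odd then the mixed chain P_α is aperiodic at s. -/
/-- If `k` divides every return time of the mixture
`P_α = α·P + (1−α)·P̃` (with `α ∈ (0,1)`) at a state `s`, then `k ∣ 2`; and if `P`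
has an odd return time at `s`, then `k = 1` (the mixed chain is aperiodic at `s`). -/
theorem stmt_17 (S : Type*) [Fintype S] [Nonempty S] [DecidableEq S]
    (P : Matrix S S ℝ)
    (hP0 : ∀ s s', 0 ≤ P s s') (hP1 : ∀ s, ∑ s', P s s' = 1)
    (pi : S → ℝ) (hpos : ∀ s, 0 < pi s) (hsum : ∑ s, pi s = 1)
    (hstat : ∀ s', ∑ s, pi s * P s s' = pi s')
    (Pt : Matrix S S ℝ) (hPt : ∀ s s', Pt s s' = pi s' * P s' s / pi s)
    (α : ℝ) (hα : α ∈ Set.Ioo (0 : ℝ) 1)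
    (Pα : Matrix S S ℝ) (hPα : Pα = α • P + (1 - α) • Pt)
    (s : S) (k : ℕ)
    (hk : ∀ n : ℕ, 1 ≤ n → 0 < (Pα ^ n) s s → k ∣ n) :
    k ∣ 2 ∧ ((∃ n : ℕ, 1 ≤ n ∧ Odd n ∧ 0 < (P ^ n) s s) → k = 1) := by
  obtain ⟨hα0, hα1⟩ := hα
  have hα1' : 0 < 1 - α := by linarith
  have hPt0 : ∀ a b, 0 ≤ Pt a b := by
    intro a b
    rw [hPt]
    exact div_nonneg (mul_nonneg (hpos b).le (hP0 b a)) (hpos a).le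
  have hPα0 : ∀ a b, 0 ≤ Pα a b := by
    intro a b
    rw [hPα]
    simp only [Matrix.add_apply, Matrix.smul_apply, smul_eq_mul]
    have := hP0 a b; have := hPt0 a b; nlinarith
  have hPαP : ∀ a b, α * P a b ≤ Pα a b := by
    intro a b
    rw [hPα]
    simp only [Matrix.add_apply, Matrix.smul_apply, smul_eq_mul]
    have := hPt0 a b; nlinarith
  have hPαPt : ∀ a b, (1 - α) * Pt a b ≤ Pα a b := by
    intro a b
    rw [hPα]
    simp only [Matrix.add_apply, Matrix.smul_apply, smul_eq_mul]
    have := hP0 a b; nlinarith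
  -- a state t with P s t > 0 exists
  obtain ⟨t, ht⟩ : ∃ t, 0 < P s t := by
    by_contra h
    push_neg at h
    have : ∑ t, P s t = 0 := Finset.sum_eq_zero fun t _ => le_antisymm (h t) (hP0 s t)
    rw [hP1 s] at this; norm_num at this
  -- (Pα^2) s s > 0
  have h2 : 0 < (Pα ^ 2) s s := by
    have hmul : (Pα ^ 2) s s = ∑ u, Pα s u * Pα u s := by
      rw [pow_two, Matrix.mul_apply]
    rw [hmul]
    apply Finset.sum_pos'
    · intro u _
      exact mul_nonneg (hPα0 s u) (hPα0 u s)
    · refine ⟨t, Finset.mem_univ t, ?_⟩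
      have h1 : 0 < Pα s t := lt_of_lt_of_le (by positivity) (hPαP s t)
      have h2' : 0 < Pα t s := by
        refine lt_of_lt_of_le ?_ (hPαPt t s)
        rw [hPt]
        have := hpos s; have := hpos t
        positivity
      exact mul_pos h1 h2'
  have hk2 : k ∣ 2 := hk 2 (by norm_num) h2
  refine ⟨hk2, ?_⟩
  rintro ⟨n, hn1, hodd, hPn⟩
  -- (Pα^n) s s ≥ α^n * (P^n) s s
  have key : ∀ m : ℕ, ∀ a b, α ^ m * (P ^ m) a b ≤ (Pα ^ m) a b ∧ 0 ≤ (P ^ m) a b := by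
    intro m
    induction m with
    | zero => intro a b; simp [Matrix.one_apply]; positivity
    | succ m ih =>
      intro a b
      constructor
      · simp only [pow_succ, Matrix.mul_apply]
        rw [Finset.mul_sum]
        apply Finset.sum_le_sum
        intro u _
        have h1 := (ih a u).1
        have h2 := (ih a u).2
        have h3 := hPαP u b
        have h4 := hP0 u b
        calc α ^ m * α * ((P ^ m) a u * P u b)
            = (α ^ m * (P ^ m) a u) * (α * P u b) := by ring
          _ ≤ (Pα ^ m) a u * Pα u b := by
              apply mul_le_mul h1 h3 (by positivity) (le_trans (by positivity) h1)
      · rw [pow_succ, Matrix.mul_apply]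
        exact Finset.sum_nonneg fun u _ => mul_nonneg (ih a u).2 (hP0 u b)
  have hPαn : 0 < (Pα ^ n) s s :=
    lt_of_lt_of_le (by positivity) (key n s s).1
  have hkn : k ∣ n := hk n hn1 hPαn
  -- k ∣ 2 and k ∣ odd n ⇒ k = 1
  rcases (Nat.dvd_prime Nat.prime_two).mp hk2 with h | h
  · exact h
  · exfalso
    rw [h] at hkn
    exact (Nat.not_even_iff_odd.mpr hodd) (even_iff_two_dvd.mpr hkn)
end
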